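/- arXiv:2101.07185 — 4 statements merged into one kernel-verified Lean document; each statement's English description precedes it below -/
import Mathlib

section
/- Fix q ∈ (0,1) and θ₀ = arccos q, x_q = sin θ₀ − θ₀ cos θ₀. For every θ ∈ (0, π/2), the discriminant quantity Δ(q,θ) = ((qθ + x_q)/sin θ)² − 1 is nonnegative, and it vanishes only at θ = θ₀. -/
/-!
With `q = cos θ₀`, the numerator `q θ + x_q` is the tangent line `sin θ₀ + cos θ₀ (θ - θ₀)`
of `sin` at `θ₀`. Since `sin` is strictly concave on `[0, π]`, it lies strictly below this
tangent away from `θ₀`, so the ratio `(q θ + x_q) / sin θ` is at least `1`, with equality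
exactly at `θ₀`.
-/

open Real Set

theorem StrictConcaveOn.lt_add_mul_sub_of_hasDerivAt {S : Set ℝ} {f : ℝ → ℝ} {a x f' : ℝ}
    (hf : StrictConcaveOn ℝ S f) (ha : a ∈ S) (hx : x ∈ S) (hxa : x ≠ a)
    (hf' : HasDerivAt f f' a) : f x < f a + f' * (x - a) := by
  rcases hxa.lt_or_gt with hlt | hgt
  · have h := hf.lt_slope_of_hasDerivAt hx ha hlt hf'
    rw [slope_def_field, lt_div_iff₀ (sub_pos.2 hlt)] at h
    linarith
  · have h := hf.slope_lt_of_hasDerivAt ha hx hgt hf'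
    rw [slope_def_field, div_lt_iff₀ (sub_pos.2 hgt)] at h
    linarith

theorem Real.sin_lt_sin_add_cos_mul_sub {a x : ℝ} (ha : a ∈ Icc 0 π) (hx : x ∈ Icc 0 π)
    (hxa : x ≠ a) : sin x < sin a + cos a * (x - a) :=
  strictConcaveOn_sin_Icc.lt_add_mul_sub_of_hasDerivAt ha hx hxa (hasDerivAt_sin a)

theorem Real.sin_le_sin_add_cos_mul_sub {a x : ℝ} (ha : a ∈ Icc 0 π) (hx : x ∈ Icc 0 π) :
    sin x ≤ sin a + cos a * (x - a) := by
  rcases eq_or_ne x a with rfl | hxa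
  · simp
  · exact (sin_lt_sin_add_cos_mul_sub ha hx hxa).le

theorem Real.sin_add_cos_mul_sub_eq_sin_iff {a x : ℝ} (ha : a ∈ Icc 0 π) (hx : x ∈ Icc 0 π) :
    sin a + cos a * (x - a) = sin x ↔ x = a := by
  refine ⟨fun h => ?_, fun h => by simp [h]⟩
  by_contra hxa
  exact (sin_lt_sin_add_cos_mul_sub ha hx hxa).ne' h

theorem div_sq_sub_one_nonneg {s L : ℝ} (hs : 0 < s) (hsL : s ≤ L) : 0 ≤ (L / s) ^ 2 - 1 := by
  have : 1 ≤ L / s := (one_le_div hs).2 hsL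
  nlinarith

theorem div_sq_sub_one_eq_zero_iff {s L : ℝ} (hs : 0 < s) (hsL : s ≤ L) :
    (L / s) ^ 2 - 1 = 0 ↔ L = s := by
  have hLs : 0 ≤ L / s := div_nonneg (hs.le.trans hsL) hs.le
  rw [sub_eq_zero, pow_eq_one_iff_of_nonneg hLs two_ne_zero, div_eq_one_iff_eq hs.ne']

theorem discriminant_nonneg (q : ℝ) (hq : q ∈ Set.Ioo (0 : ℝ) 1)
    (θ₀ xq : ℝ) (hθ₀ : θ₀ = Real.arccos q)
    (hxq : xq = Real.sin θ₀ - θ₀ * Real.cos θ₀)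
    (Δ : ℝ → ℝ) (hΔ : ∀ θ, Δ θ = ((q * θ + xq) / Real.sin θ) ^ 2 - 1) :
    ∀ θ ∈ Set.Ioo 0 (Real.pi / 2), 0 ≤ Δ θ ∧ (Δ θ = 0 ↔ θ = θ₀) := by
  intro θ ⟨hθ0, hθπ⟩
  have hcos : cos θ₀ = q := hθ₀ ▸ cos_arccos (by linarith [hq.1]) hq.2.le
  have hθ₀mem : θ₀ ∈ Icc 0 π := hθ₀ ▸ ⟨arccos_nonneg q, arccos_le_pi q⟩
  have hθmem : θ ∈ Icc 0 π := ⟨hθ0.le, by linarith [pi_pos]⟩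
  have htangent : q * θ + xq = sin θ₀ + cos θ₀ * (θ - θ₀) := by rw [hxq, hcos]; ring
  have hsin : 0 < sin θ := sin_pos_of_pos_of_lt_pi hθ0 (by linarith [pi_pos])
  have hle := sin_le_sin_add_cos_mul_sub hθ₀mem hθmem
  rw [hΔ, htangent, div_sq_sub_one_eq_zero_iff hsin hle,
    sin_add_cos_mul_sub_eq_sin_iff hθ₀mem hθmem]
  exact ⟨div_sq_sub_one_nonneg hsin hle, Iff.rfl⟩
end

section
/- For q ∈ (0,1), the function θ ↦ (qθ + x_q)/tan θ has negative derivative on (0, π/2), and the function θ ↦ (qθ + x_q)/sin θ is decreasing on (0, θ₀) and increasing on (θ₀, π/2), where θ₀ = arccos q and x_q = sin θ₀ − θ₀ cos θ₀. -/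
/-!
For `g θ = (a θ + b) / sin θ` one has `g' = N / sin²` with `N θ = a sin θ - (a θ + b) cos θ`, and
`N' θ = (a θ + b) sin θ > 0` on `(0, π)`. So `N` changes sign exactly once, at the critical point,
which for `a = q = cos θ₀` and `b = x_q` is `θ₀`. The derivative of `(a θ + b) cos θ / sin θ` is
`(a sin θ cos θ - (a θ + b)) / sin² θ`, negative because `sin θ cos θ < θ`.
-/

open Real Set

section AffineQuotients

variable {a b θ θ₀ : ℝ}

theorem hasDerivAt_mul_add : HasDerivAt (fun θ => a * θ + b) a θ := by
  simpa using ((hasDerivAt_id θ).const_mul a).add_const b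

theorem hasDerivAt_affine_div_tan (hs : sin θ ≠ 0) (hc : cos θ ≠ 0) :
    HasDerivAt (fun θ => (a * θ + b) / tan θ)
      ((a * sin θ * cos θ - (a * θ + b)) / sin θ ^ 2) θ := by
  have ht : tan θ ≠ 0 := by rw [tan_eq_sin_div_cos]; positivity
  refine (hasDerivAt_mul_add.div (hasDerivAt_tan hc) ht).congr_deriv ?_
  rw [tan_eq_sin_div_cos]
  field_simp

theorem hasDerivAt_affine_div_sin (hs : sin θ ≠ 0) :
    HasDerivAt (fun θ => (a * θ + b) / sin θ)
      ((a * sin θ - (a * θ + b) * cos θ) / sin θ ^ 2) θ :=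
  hasDerivAt_mul_add.div (hasDerivAt_sin θ) hs

theorem hasDerivAt_sin_sub_affine_mul_cos :
    HasDerivAt (fun θ => a * sin θ - (a * θ + b) * cos θ) ((a * θ + b) * sin θ) θ := by
  refine (((hasDerivAt_sin θ).const_mul a).sub
    (hasDerivAt_mul_add.mul (hasDerivAt_cos θ))).congr_deriv ?_
  ring

theorem affine_div_tan_deriv_neg (ha : 0 ≤ a) (hb : 0 < b) (hθ : θ ∈ Ioo 0 (π / 2)) :
    deriv (fun θ => (a * θ + b) / tan θ) θ < 0 := by
  obtain ⟨hθ0, hθπ⟩ := hθ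
  have hs : 0 < sin θ := sin_pos_of_pos_of_lt_pi hθ0 (by linarith [pi_pos])
  have hc : 0 < cos θ := cos_pos_of_mem_Ioo ⟨by linarith, hθπ⟩
  rw [(hasDerivAt_affine_div_tan hs.ne' hc.ne').deriv]
  have hsc : sin θ * cos θ < θ :=
    (mul_le_of_le_one_right hs.le (cos_le_one θ)).trans_lt (sin_lt hθ0)
  have : a * sin θ * cos θ ≤ a * θ := by
    rw [mul_assoc]; exact mul_le_mul_of_nonneg_left hsc.le ha
  exact div_neg_of_neg_of_pos (by linarith) (by positivity)

theorem strictMonoOn_sin_sub_affine_mul_cos (ha : 0 ≤ a) (hb : 0 < b) :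
    StrictMonoOn (fun θ => a * sin θ - (a * θ + b) * cos θ) (Icc 0 π) := by
  refine strictMonoOn_of_deriv_pos (convex_Icc 0 π) (by fun_prop) fun θ hθ => ?_
  rw [interior_Icc] at hθ
  rw [hasDerivAt_sin_sub_affine_mul_cos.deriv]
  have hs := sin_pos_of_pos_of_lt_pi hθ.1 hθ.2
  have : 0 < a * θ + b := by nlinarith [hθ.1]
  positivity

theorem antitoneOn_affine_div_sin (ha : 0 ≤ a) (hb : 0 < b) (hθ₀ : θ₀ < π)
    (hcrit : a * sin θ₀ = (a * θ₀ + b) * cos θ₀) :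
    AntitoneOn (fun θ => (a * θ + b) / sin θ) (Ioc 0 θ₀) := by
  have hsin : ∀ θ ∈ Ioc 0 θ₀, 0 < sin θ := fun θ hθ =>
    sin_pos_of_pos_of_lt_pi hθ.1 (hθ.2.trans_lt hθ₀)
  refine antitoneOn_of_deriv_nonpos (convex_Ioc 0 θ₀)
    (ContinuousOn.div (by fun_prop) (by fun_prop) fun θ hθ => (hsin θ hθ).ne') ?_ ?_
  all_goals rw [interior_Ioc]
  · exact fun θ hθ => (hasDerivAt_affine_div_sin (hsin θ (Ioo_subset_Ioc_self hθ)).ne')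
      |>.differentiableAt.differentiableWithinAt
  · intro θ hθ
    rw [(hasDerivAt_affine_div_sin (hsin θ (Ioo_subset_Ioc_self hθ)).ne').deriv]
    have hN := strictMonoOn_sin_sub_affine_mul_cos ha hb
      ⟨hθ.1.le, by linarith [hθ.2]⟩ ⟨by linarith [hθ.1, hθ.2], hθ₀.le⟩ hθ.2
    exact div_nonpos_of_nonpos_of_nonneg (by simp only at hN; linarith) (sq_nonneg _)

theorem monotoneOn_affine_div_sin (ha : 0 ≤ a) (hb : 0 < b) (hθ₀ : 0 < θ₀)
    (hcrit : a * sin θ₀ = (a * θ₀ + b) * cos θ₀) :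
    MonotoneOn (fun θ => (a * θ + b) / sin θ) (Ico θ₀ π) := by
  have hsin : ∀ θ ∈ Ico θ₀ π, 0 < sin θ := fun θ hθ =>
    sin_pos_of_pos_of_lt_pi (hθ₀.trans_le hθ.1) hθ.2
  refine monotoneOn_of_deriv_nonneg (convex_Ico θ₀ π)
    (ContinuousOn.div (by fun_prop) (by fun_prop) fun θ hθ => (hsin θ hθ).ne') ?_ ?_
  all_goals rw [interior_Ico]
  · exact fun θ hθ => (hasDerivAt_affine_div_sin (hsin θ (Ioo_subset_Ico_self hθ)).ne')
      |>.differentiableAt.differentiableWithinAt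
  · intro θ hθ
    rw [(hasDerivAt_affine_div_sin (hsin θ (Ioo_subset_Ico_self hθ)).ne').deriv]
    have hN := strictMonoOn_sin_sub_affine_mul_cos ha hb
      ⟨hθ₀.le, by linarith [hθ.1, hθ.2]⟩ ⟨by linarith [hθ.1], hθ.2.le⟩ hθ.1
    exact div_nonneg (by simp only at hN; linarith) (sq_nonneg _)

end AffineQuotients

theorem sin_sub_mul_cos_pos {x : ℝ} (hx0 : 0 < x) (hx : x < π / 2) : 0 < sin x - x * cos x := by
  have hc : 0 < cos x := cos_pos_of_mem_Ioo ⟨by linarith, hx⟩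
  have := lt_tan hx0 hx
  rw [tan_eq_sin_div_cos, lt_div_iff₀ hc] at this
  linarith

theorem monotonicity_tan_sin (q : ℝ) (hq : q ∈ Set.Ioo (0 : ℝ) 1)
    (θ₀ xq : ℝ) (hθ₀ : θ₀ = Real.arccos q)
    (hxq : xq = Real.sin θ₀ - θ₀ * Real.cos θ₀) :
    (∀ θ ∈ Set.Ioo 0 (Real.pi / 2),
        deriv (fun θ => (q * θ + xq) / Real.tan θ) θ < 0) ∧
    AntitoneOn (fun θ => (q * θ + xq) / Real.sin θ) (Set.Ioc 0 θ₀) ∧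
    MonotoneOn (fun θ => (q * θ + xq) / Real.sin θ) (Set.Ico θ₀ (Real.pi / 2)) := by
  obtain ⟨hq0, hq1⟩ := hq
  have hθ₀pos : 0 < θ₀ := hθ₀ ▸ arccos_pos.2 hq1
  have hθ₀lt : θ₀ < π / 2 := hθ₀ ▸ arccos_lt_pi_div_two.2 hq0
  have hcos : cos θ₀ = q := hθ₀ ▸ cos_arccos (by linarith) hq1.le
  have hxq_pos : 0 < xq := hxq ▸ sin_sub_mul_cos_pos hθ₀pos hθ₀lt
  have hcrit : q * sin θ₀ = (q * θ₀ + xq) * cos θ₀ := by rw [hxq, hcos]; ring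
  refine ⟨fun θ hθ => affine_div_tan_deriv_neg hq0.le hxq_pos hθ,
    antitoneOn_affine_div_sin hq0.le hxq_pos (by linarith [pi_pos]) hcrit,
    (monotoneOn_affine_div_sin hq0.le hxq_pos hθ₀pos hcrit).mono ?_⟩
  exact Ico_subset_Ico_right (by linarith [pi_pos])
end

section
/- Let z₋⁰ = −i(q − √(q²−1)) for q ≥ 1, and h_q(z) = −iz + q·log(1−z²). Then Re h_q(z₋⁰) = q·ln(2q/e) + √(q²−1) − q·ln(q + √(q²−1)), and in particular Re h_q(z₋⁰) ≤ q·ln(2q/e) for all q ≥ 1. -/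
/-! With `t = arcosh q` we have `q = cosh t`, `√(q² - 1) = sinh t` and `q - √(q² - 1) = e⁻ᵗ`.
The saddle point `-i e⁻ᵗ` lies on the imaginary axis, where `1 - z²` is a positive real, so
`Re h_q = -e⁻ᵗ + q log(1 + e⁻²ᵗ) = sinh t - cosh t + q (log (2q) - t)`. The inequality is then
`sinh t ≤ t cosh t`, i.e. `tanh t ≤ t` for `t ≥ 0`. -/

open Complex Real

namespace Real

theorem sinh_le_mul_cosh {t : ℝ} (ht : 0 ≤ t) : sinh t ≤ t * cosh t := by
  have hderiv (x : ℝ) : HasDerivAt (fun x => x * cosh x - sinh x) (x * sinh x) x :=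
    (((hasDerivAt_id' x).mul (hasDerivAt_cosh x)).sub (hasDerivAt_sinh x)).congr_deriv (by ring)
  have hmono : MonotoneOn (fun x => x * cosh x - sinh x) (Set.Ici 0) := by
    refine monotoneOn_of_hasDerivWithinAt_nonneg (convex_Ici 0) (by fun_prop)
      (fun x _ => (hderiv x).hasDerivWithinAt) fun x hx => ?_
    rw [interior_Ici, Set.mem_Ioi] at hx
    exact mul_nonneg hx.le (sinh_nonneg_iff.mpr hx.le)
  simpa using hmono Set.self_mem_Ici ht ht

theorem sqrt_sq_sub_one_le_mul_arcosh {x : ℝ} (hx : 1 ≤ x) : √(x ^ 2 - 1) ≤ x * arcosh x := by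
  simpa [sinh_arcosh hx, cosh_arcosh hx, mul_comm] using sinh_le_mul_cosh (arcosh_nonneg hx)

theorem log_sub_sqrt_sq_sub_one {x : ℝ} (hx : 1 ≤ x) : log (x - √(x ^ 2 - 1)) = -arcosh x := by
  rw [← add_sqrt_self_sq_sub_one_inv hx, log_inv, arcosh]

theorem one_add_sub_sqrt_sq_sub_one_sq {x : ℝ} (hx : 1 ≤ x) :
    1 + (x - √(x ^ 2 - 1)) ^ 2 = 2 * x * (x - √(x ^ 2 - 1)) := by
  have := sq_sqrt (sub_nonneg.mpr (one_le_pow₀ hx : 1 ≤ x ^ 2))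
  linear_combination this

end Real

theorem Complex.re_neg_I_mul_add_mul_log_one_sub_sq_neg_I_mul (q a : ℝ) :
    (-I * (-I * a) + q * log (1 - (-I * a) ^ 2)).re = -a + q * Real.log (1 + a ^ 2) := by
  have h1 : (1 : ℂ) - (-I * a) ^ 2 = ((1 + a ^ 2 : ℝ) : ℂ) := by
    push_cast
    rw [mul_pow, neg_sq, I_sq]
    ring
  have h2 : -I * (-I * a) = ((-a : ℝ) : ℂ) := by
    push_cast
    rw [← mul_assoc, neg_mul_neg, I_mul_I]
    ring
  rw [h1, h2, ← ofReal_log (by positivity)]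
  simp

theorem re_hq_at_saddle (q : ℝ) (hq : 1 ≤ q)
    (zm : ℂ) (hz : zm = -Complex.I * ((q : ℂ) - (Real.sqrt (q ^ 2 - 1) : ℂ)))
    (h : ℂ → ℂ)
    (hh : ∀ z : ℂ, h z = -Complex.I * z + (q : ℂ) * Complex.log (1 - z ^ 2)) :
    (h zm).re = q * Real.log (2 * q / Real.exp 1) +
        Real.sqrt (q ^ 2 - 1) - q * Real.log (q + Real.sqrt (q ^ 2 - 1)) ∧
    (h zm).re ≤ q * Real.log (2 * q / Real.exp 1) := by
  set s := √(q ^ 2 - 1)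
  have hpos : 0 < q - s := by
    rw [← add_sqrt_self_sq_sub_one_inv hq]; positivity
  have hre : (h zm).re = -(q - s) + q * (Real.log (2 * q) - arcosh q) := by
    rw [hh, hz, ← ofReal_sub, re_neg_I_mul_add_mul_log_one_sub_sq_neg_I_mul,
      one_add_sub_sqrt_sq_sub_one_sq hq, Real.log_mul (by positivity) hpos.ne',
      log_sub_sqrt_sq_sub_one hq]
    ring
  have hlog : Real.log (2 * q / Real.exp 1) = Real.log (2 * q) - 1 := by
    rw [Real.log_div (by positivity) (Real.exp_ne_zero 1), Real.log_exp]
  refine ⟨by rw [hre, hlog, arcosh]; ring, ?_⟩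
  rw [hre, hlog]
  linarith [sqrt_sq_sub_one_le_mul_arcosh hq]
end

section
/- Let ψ : (0,∞) → ℂ be measurable and suppose there exist constants C, D > 0 and an integer k with |k| ≥ 2 and γ = √(k² − ν²) ≥ 1 (for some ν ∈ [−1,1]) such that |ψ(r)| ≤ C·(min(r/2, 1))^{γ−1}·e^{−D|k|} for 0 < r ≤ max(|k|/2, 2), |ψ(r)| ≤ C·|k|^{−3/4}·(||k|−r| + |k|^{1/3})^{−1/4} for |k|/2 ≤ r ≤ 2|k|, and |ψ(r)| ≤ C·r^{−1} for r ≥ 2|k|. Then there is a constant C′ depending only on C, D (not on k, ν, R) such that for every R ≥ 1, (∫_R^{2R} |ψ(r)|² r² dr)^{1/2} ≤ C′·R^{1/2}. -/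
open Real MeasureTheory Set

/- The mass of `|ψ r|² r²` on `(R, 2R]` is controlled region by region: near the origin the factor
`e^{-D|k|}` beats `r² ≤ |k|²`, far out `|ψ r|² r² ≤ C²`, and in the transition region `r ≈ |k|`
the bound is `C² |k|^{1/2} (||k| - r| + |k|^{1/3})^{-1/2}`, whose integral over an interval of
length `R` is `O(|k|^{1/2} R^{1/2})`; there `|k| ≤ 4R`, so every piece is `O(R)`. -/

namespace Real

theorem sqrt_sub_sqrt_le_sqrt_sub (x y : ℝ) : √x - √y ≤ √(x - y) := by
  rcases le_total x y with hxy | hyx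
  · linarith [sqrt_le_sqrt hxy, sqrt_nonneg (x - y)]
  rcases le_total y 0 with hy | hy
  · rw [sqrt_eq_zero_of_nonpos hy, sub_zero]
    exact sqrt_le_sqrt (by linarith)
  have hsub : √x ≤ √(x - y) + √y := by
    rw [sqrt_le_left (by positivity)]
    nlinarith [sq_sqrt (sub_nonneg.2 hyx), sq_sqrt hy,
      mul_nonneg (sqrt_nonneg (x - y)) (sqrt_nonneg y)]
  linarith

theorem mul_exp_neg_mul_le_inv {D : ℝ} (hD : 0 < D) (m : ℝ) : m * exp (-D * m) ≤ D⁻¹ :=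
  calc m * exp (-D * m) = D⁻¹ * (D * m) * exp (-(D * m)) := by field_simp
    _ ≤ D⁻¹ * exp (D * m) * exp (-(D * m)) := by
      gcongr
      linarith [add_one_le_exp (D * m)]
    _ = D⁻¹ := by rw [mul_assoc, ← exp_add, add_neg_cancel, exp_zero, mul_one]

/-- For `x < 0`, `Real.rpow` gives `x ^ (-1/2) = exp (log x * (-1/2)) * cos (-π/2) = 0`. -/
theorem rpow_neg_half_nonneg (x : ℝ) : 0 ≤ x ^ (-(1 : ℝ) / 2) := by
  rcases le_or_gt 0 x with hx | hx
  · exact rpow_nonneg hx _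
  · rw [rpow_def_of_neg hx, show -(1 : ℝ) / 2 * π = -(π / 2) by ring, cos_neg, cos_pi_div_two,
      mul_zero]

end Real

theorem integral_rpow_neg_half (a b : ℝ) :
    ∫ t in a..b, t ^ (-(1 : ℝ) / 2) = 2 * √b - 2 * √a := by
  rw [integral_rpow (Or.inl (by norm_num)), show -(1 : ℝ) / 2 + 1 = 1 / 2 by norm_num,
    ← sqrt_eq_rpow, ← sqrt_eq_rpow]
  ring

theorem integral_const_sub_rpow_neg_half_le (c x y : ℝ) :
    ∫ r in x..y, (c - r) ^ (-(1 : ℝ) / 2) ≤ 2 * √(y - x) := by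
  rw [intervalIntegral.integral_comp_sub_left (fun t => t ^ (-(1 : ℝ) / 2)) c,
    integral_rpow_neg_half]
  have := sqrt_sub_sqrt_le_sqrt_sub (c - x) (c - y)
  rw [show c - x - (c - y) = y - x by ring] at this
  linarith

theorem integral_sub_const_rpow_neg_half_le (c x y : ℝ) :
    ∫ r in x..y, (r - c) ^ (-(1 : ℝ) / 2) ≤ 2 * √(y - x) := by
  rw [intervalIntegral.integral_comp_sub_right (fun t => t ^ (-(1 : ℝ) / 2)) c,
    integral_rpow_neg_half]
  have := sqrt_sub_sqrt_le_sqrt_sub (y - c) (x - c)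
  rw [show y - c - (x - c) = y - x by ring] at this
  linarith

/-- Each of the two summands on the right vanishes on the side of `c` where its base is negative. -/
theorem rpow_abs_sub_add_le (a c r : ℝ) :
    (|c - r| + a) ^ (-(1 : ℝ) / 2) ≤
      (c + a - r) ^ (-(1 : ℝ) / 2) + (r - (c - a)) ^ (-(1 : ℝ) / 2) := by
  rcases le_total r c with h | h
  · rw [abs_of_nonneg (sub_nonneg.2 h), show c - r + a = c + a - r by ring]
    linarith [rpow_neg_half_nonneg (r - (c - a))]
  · rw [abs_of_nonpos (sub_nonpos.2 h), show -(c - r) + a = r - (c - a) by ring]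
    linarith [rpow_neg_half_nonneg (c + a - r)]

theorem continuous_rpow_abs_sub_add {a : ℝ} (ha : 0 < a) (c : ℝ) :
    Continuous fun r : ℝ => (|c - r| + a) ^ (-(1 : ℝ) / 2) :=
  ((continuous_const.sub continuous_id).abs.add continuous_const).rpow_const
    fun r => Or.inl (by positivity : 0 < |c - r| + a).ne'

theorem integral_rpow_abs_sub_add_le {a : ℝ} (ha : 0 < a) (c : ℝ) {x y : ℝ} (hxy : x ≤ y) :
    ∫ r in x..y, (|c - r| + a) ^ (-(1 : ℝ) / 2) ≤ 4 * √(y - x) := by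
  have hleft : IntervalIntegrable (fun r => (c + a - r) ^ (-(1 : ℝ) / 2)) volume x y := by
    simpa using (intervalIntegral.intervalIntegrable_rpow' (a := c + a - x) (b := c + a - y)
      (by norm_num : (-1 : ℝ) < -(1 : ℝ) / 2)).comp_sub_left (c + a)
  have hright : IntervalIntegrable (fun r => (r - (c - a)) ^ (-(1 : ℝ) / 2)) volume x y := by
    simpa using (intervalIntegral.intervalIntegrable_rpow' (a := x - (c - a)) (b := y - (c - a))
      (by norm_num : (-1 : ℝ) < -(1 : ℝ) / 2)).comp_sub_right (c - a)
  calc ∫ r in x..y, (|c - r| + a) ^ (-(1 : ℝ) / 2)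
      ≤ ∫ r in x..y, ((c + a - r) ^ (-(1 : ℝ) / 2) + (r - (c - a)) ^ (-(1 : ℝ) / 2)) :=
        intervalIntegral.integral_mono_on hxy
          ((continuous_rpow_abs_sub_add ha c).intervalIntegrable _ _)
          (hleft.add hright) fun r _ => rpow_abs_sub_add_le a c r
    _ ≤ 2 * √(y - x) + 2 * √(y - x) := by
        rw [intervalIntegral.integral_add hleft hright]
        exact add_le_add (integral_const_sub_rpow_neg_half_le _ _ _)
          (integral_sub_const_rpow_neg_half_le _ _ _)
    _ = 4 * √(y - x) := by ring

theorem setIntegral_Ioc_le_of_le_add_mul_rpow_abs_sub_add {F : ℝ → ℝ} {x y A B a c : ℝ}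
    (hxy : x ≤ y) (ha : 0 < a) (hB : 0 ≤ B) (hF₀ : ∀ r ∈ Ioc x y, 0 ≤ F r)
    (hF : ∀ r ∈ Ioc x y, F r ≤ A + B * (|c - r| + a) ^ (-(1 : ℝ) / 2)) :
    ∫ r in Ioc x y, F r ≤ A * (y - x) + 4 * B * √(y - x) := by
  have hcont : Continuous fun r => A + B * (|c - r| + a) ^ (-(1 : ℝ) / 2) :=
    continuous_const.add (continuous_const.mul (continuous_rpow_abs_sub_add ha c))
  calc ∫ r in Ioc x y, F r
      ≤ ∫ r in Ioc x y, (A + B * (|c - r| + a) ^ (-(1 : ℝ) / 2)) :=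
        setIntegral_mono_of_nonneg hF₀ hF (hcont.integrableOn_Icc.mono_set Ioc_subset_Icc_self)
    _ = A * (y - x) + B * ∫ r in x..y, (|c - r| + a) ^ (-(1 : ℝ) / 2) := by
        rw [← intervalIntegral.integral_of_le hxy,
          intervalIntegral.integral_add intervalIntegrable_const
          (((continuous_rpow_abs_sub_add ha c).intervalIntegrable _ _).const_mul B),
          intervalIntegral.integral_const_mul, intervalIntegral.integral_const, smul_eq_mul,
          mul_comm (y - x)]
    _ ≤ A * (y - x) + B * (4 * √(y - x)) := by
        gcongr
        exact integral_rpow_abs_sub_add_le ha c hxy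
    _ = A * (y - x) + 4 * B * √(y - x) := by ring

theorem sq_mul_sq_le_of_le_mul_exp {u r b C D m : ℝ} (hD : 0 < D) (hu : 0 ≤ u) (hr : 0 ≤ r)
    (hrm : r ≤ m) (hb₀ : 0 ≤ b) (hb₁ : b ≤ 1) (h : u ≤ C * b * exp (-D * m)) :
    u ^ 2 * r ^ 2 ≤ C ^ 2 / D ^ 2 := by
  have hbound : u * r ≤ |C| * D⁻¹ :=
    calc u * r ≤ |C| * exp (-D * m) * m := by
          gcongr
          calc u ≤ |C * b * exp (-D * m)| := h.trans (le_abs_self _)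
            _ ≤ |C| * exp (-D * m) := by
                rw [abs_mul, abs_mul, abs_of_nonneg hb₀, abs_of_pos (exp_pos _)]
                gcongr
                exact mul_le_of_le_one_right (abs_nonneg C) hb₁
      _ = |C| * (m * exp (-D * m)) := by ring
      _ ≤ |C| * D⁻¹ := by gcongr; exact mul_exp_neg_mul_le_inv hD m
  calc u ^ 2 * r ^ 2 = (u * r) ^ 2 := by ring
    _ ≤ (|C| * D⁻¹) ^ 2 := by gcongr
    _ = C ^ 2 / D ^ 2 := by rw [mul_pow, sq_abs, inv_pow, div_eq_mul_inv]

theorem sq_mul_sq_le_of_le_mul_rpow {u r C m t : ℝ} (hu : 0 ≤ u) (hr : 0 ≤ r) (hrm : r ≤ 2 * m)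
    (hm : 0 < m) (ht : 0 < t) (h : u ≤ C * m ^ (-(3 : ℝ) / 4) * t ^ (-(1 : ℝ) / 4)) :
    u ^ 2 * r ^ 2 ≤ 4 * C ^ 2 * √m * t ^ (-(1 : ℝ) / 2) := by
  have hm' : (m ^ (-(3 : ℝ) / 4)) ^ 2 * m ^ 2 = √m := by
    rw [sqrt_eq_rpow, ← rpow_natCast, ← rpow_natCast, ← rpow_mul hm.le, ← rpow_add hm]
    norm_num
  have ht' : (t ^ (-(1 : ℝ) / 4)) ^ 2 = t ^ (-(1 : ℝ) / 2) := by
    rw [← rpow_natCast, ← rpow_mul ht.le]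
    norm_num
  calc u ^ 2 * r ^ 2 = (u * r) ^ 2 := by ring
    _ ≤ (|C| * m ^ (-(3 : ℝ) / 4) * t ^ (-(1 : ℝ) / 4) * (2 * m)) ^ 2 := by
        gcongr
        exact h.trans (by gcongr; exact le_abs_self C)
    _ = 4 * C ^ 2 * ((m ^ (-(3 : ℝ) / 4)) ^ 2 * m ^ 2) * (t ^ (-(1 : ℝ) / 4)) ^ 2 := by
        rw [← sq_abs C]; ring
    _ = 4 * C ^ 2 * √m * t ^ (-(1 : ℝ) / 2) := by rw [hm', ht']

theorem sq_mul_sq_le_of_le_mul_inv {u r C : ℝ} (hu : 0 ≤ u) (hr : 0 < r) (h : u ≤ C * r⁻¹) :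
    u ^ 2 * r ^ 2 ≤ C ^ 2 := by
  have hur : u * r ≤ C := by
    calc u * r ≤ C * r⁻¹ * r := by gcongr
      _ = C := by field_simp
  calc u ^ 2 * r ^ 2 = (u * r) ^ 2 := by ring
    _ ≤ C ^ 2 := by gcongr

theorem norm_sq_mul_sq_le_envelope {E : Type*} [SeminormedAddGroup E] {ψ : ℝ → E}
    {C D m a γ R r : ℝ} (hD : 0 < D) (hm : 2 ≤ m) (ha : 0 < a) (hγ : 1 ≤ γ)
    (h₁ : ∀ r : ℝ, 0 < r → r ≤ max (m / 2) 2 →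
      ‖ψ r‖ ≤ C * (min (r / 2) 1) ^ (γ - 1) * exp (-D * m))
    (h₂ : ∀ r : ℝ, m / 2 ≤ r → r ≤ 2 * m →
      ‖ψ r‖ ≤ C * m ^ (-(3 : ℝ) / 4) * (|m - r| + a) ^ (-(1 : ℝ) / 4))
    (h₃ : ∀ r : ℝ, 2 * m ≤ r → ‖ψ r‖ ≤ C * r⁻¹) (hr : 0 < r) (hrR : r ≤ 2 * R) :
    ‖ψ r‖ ^ 2 * r ^ 2 ≤
      C ^ 2 / D ^ 2 + C ^ 2 + 8 * C ^ 2 * √R * (|m - r| + a) ^ (-(1 : ℝ) / 2) := by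
  have hinner : 0 ≤ C ^ 2 / D ^ 2 := by positivity
  have hfar : 0 ≤ C ^ 2 := by positivity
  have htransition : 0 ≤ 8 * C ^ 2 * √R * (|m - r| + a) ^ (-(1 : ℝ) / 2) := by positivity
  rcases le_or_gt r (max (m / 2) 2) with hr₁ | hr₁
  · have hmin : 0 ≤ min (r / 2) 1 := le_min (by positivity) zero_le_one
    have hbound := sq_mul_sq_le_of_le_mul_exp hD (norm_nonneg _) hr.le
      (hr₁.trans (max_le (by linarith) hm)) (rpow_nonneg hmin _)
      (rpow_le_one hmin (min_le_right _ _) (by linarith)) (h₁ r hr hr₁)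
    linarith
  rcases le_or_gt r (2 * m) with hr₂ | hr₂
  · have hmr : m / 2 ≤ r := (le_max_left _ _).trans hr₁.le
    have hbound := sq_mul_sq_le_of_le_mul_rpow (norm_nonneg _) hr.le hr₂ (by linarith)
      (by positivity) (h₂ r hmr hr₂)
    have hsqrt : √m ≤ 2 * √R := by
      rw [sqrt_le_left (by positivity), mul_pow, sq_sqrt (by linarith)]
      linarith
    calc ‖ψ r‖ ^ 2 * r ^ 2 ≤ 4 * C ^ 2 * √m * (|m - r| + a) ^ (-(1 : ℝ) / 2) := hbound
      _ ≤ 4 * C ^ 2 * (2 * √R) * (|m - r| + a) ^ (-(1 : ℝ) / 2) := by gcongr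
      _ ≤ C ^ 2 / D ^ 2 + C ^ 2 + 8 * C ^ 2 * √R * (|m - r| + a) ^ (-(1 : ℝ) / 2) := by
        linarith
  · have hbound := sq_mul_sq_le_of_le_mul_inv (norm_nonneg _) hr (h₃ r hr₂.le)
    linarith

theorem dyadic_L2_bound_large_R (C D : ℝ) (hC : 0 < C) (hD : 0 < D) :
    ∃ C' : ℝ, 0 < C' ∧
      ∀ (ν : ℝ), ν ∈ Set.Icc (-1 : ℝ) 1 →
      ∀ (k : ℤ), 2 ≤ |k| →
      ∀ (γ : ℝ), γ = Real.sqrt ((k : ℝ) ^ 2 - ν ^ 2) → 1 ≤ γ →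
      ∀ (ψ : ℝ → ℂ), Measurable ψ →
        (∀ r : ℝ, 0 < r → r ≤ max ((|k| : ℝ) / 2) 2 →
          ‖ψ r‖ ≤ C * (min (r / 2) 1) ^ (γ - 1) * Real.exp (-D * |k|)) →
        (∀ r : ℝ, (|k| : ℝ) / 2 ≤ r → r ≤ 2 * |k| →
          ‖ψ r‖ ≤
            C * (|k| : ℝ) ^ (-(3 : ℝ) / 4) *
              (|(|k| : ℝ) - r| + (|k| : ℝ) ^ ((1 : ℝ) / 3)) ^ (-(1 : ℝ) / 4)) →
        (∀ r : ℝ, 2 * (|k| : ℝ) ≤ r → ‖ψ r‖ ≤ C * r⁻¹) →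
        ∀ R : ℝ, 1 ≤ R →
          (∫ r in Set.Ioc R (2 * R), ‖ψ r‖ ^ 2 * r ^ 2) ^ ((1 : ℝ) / 2) ≤
            C' * R ^ ((1 : ℝ) / 2) := by
  refine ⟨√(C ^ 2 / D ^ 2 + 33 * C ^ 2), by positivity, ?_⟩
  intro ν _ k hk γ _ hγ ψ _ h₁ h₂ h₃ R hR
  simp only [Int.cast_abs] at h₁ h₂ h₃
  have hm : (2 : ℝ) ≤ (|k| : ℝ) := by exact_mod_cast hk
  have ha : (0 : ℝ) < (|k| : ℝ) ^ ((1 : ℝ) / 3) := by positivity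
  have hintegral := setIntegral_Ioc_le_of_le_add_mul_rpow_abs_sub_add
    (F := fun r => ‖ψ r‖ ^ 2 * r ^ 2)
    (by linarith : R ≤ 2 * R) ha (by positivity : 0 ≤ 8 * C ^ 2 * √R) (fun r _ => by positivity)
    fun r hr => norm_sq_mul_sq_le_envelope hD hm ha hγ h₁ h₂ h₃ (by linarith [hr.1]) hr.2
  have hconst : (C ^ 2 / D ^ 2 + C ^ 2) * (2 * R - R) + 4 * (8 * C ^ 2 * √R) * √(2 * R - R) =
      (C ^ 2 / D ^ 2 + 33 * C ^ 2) * R := by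
    rw [show 2 * R - R = R by ring]
    linear_combination (32 * C ^ 2) * mul_self_sqrt (by linarith : 0 ≤ R)
  rw [← sqrt_eq_rpow, ← sqrt_eq_rpow, ← sqrt_mul (by positivity)]
  exact sqrt_le_sqrt (hintegral.trans hconst.le)
end
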